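/- Let d : ℝ → ℝ be positive and 1-Lipschitz. Let (I_n)_{n∈ℤ} and (Ĩ_m)_{m∈ℤ} be two partitions of ℝ into consecutive bounded half-open intervals (left-closed, right-open, listed in increasing order, with endpoints tending to ±∞) such that ∫_{I_n} dx/d(x) = c for every n and ∫_{Ĩ_m} dx/d(x) = c̃ for every m, where c, c̃ ∈ (0,1) are constants. Let Γ ⊂ ℝ be measurable and suppose there exist γ ∈ (0,1) and a ≥ 1 with |Γ ∩ I_n^a| ≥ γ·a·|I_n| for every n ∈ ℤ. Then there exist γ̃ ∈ (0,1) and ã ≥ 1 such that |Γ ∩ Ĩ_m^{ã}| ≥ γ̃·ã·|Ĩ_m| for every m ∈ ℤ. -/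

import Mathlib

open MeasureTheory Filter Set

/-- The interval with the same center as `[u, v]` and length `a * (v - u)`. -/
def ampIcc (u v a : ℝ) : Set ℝ :=
  Set.Icc ((u + v) / 2 - a * (v - u) / 2) ((u + v) / 2 + a * (v - u) / 2)

/-!
Since `d` is 1-Lipschitz it varies by at most `v - u` on `[u, v]`, so `∫_{[u,v)} 1/d = k` ties the
length to `d` at any point `z` of the interval: `(1-k)(v-u) ≤ k d(z) ≤ (1+k)(v-u)`. Hence `Ĩ_m` and
the `I_n` containing its left endpoint have comparable lengths; enlarging `Ĩ_m` by a fixed factor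
`ã` makes it contain `I_n^a`, whose share of `Γ` is then a fixed fraction of `|Ĩ_m^{ã}|`.
-/

theorem Monotone.exists_mem_Ico_of_tendsto {α : Type*} [LinearOrder α] [NoMaxOrder α]
    {s : ℤ → α} (hs : Monotone s) (htop : Tendsto s atTop atTop) (hbot : Tendsto s atBot atBot)
    (x : α) : ∃ n : ℤ, x ∈ Ico (s n) (s (n + 1)) := by
  obtain ⟨N, hN⟩ := (htop.eventually_gt_atTop x).exists
  obtain ⟨M, hM⟩ := (hbot.eventually (eventually_le_atBot x)).exists
  have hbdd : ∀ m, s m ≤ x → m ≤ N := fun m hm =>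
    le_of_lt (lt_of_not_ge fun h => (hm.trans_lt hN).not_ge (hs h))
  obtain ⟨n, hn, hmax⟩ := Int.exists_greatest_of_bdd ⟨N, hbdd⟩ ⟨M, hM⟩
  exact ⟨n, hn, lt_of_not_ge fun h => (Int.lt_succ n).not_ge (hmax _ h)⟩

section Lipschitz

variable {d : ℝ → ℝ} {u v z : ℝ}

theorem LipschitzWith.abs_sub_le_of_mem_Icc (hd : LipschitzWith 1 d) {x : ℝ} (hx : x ∈ Icc u v)
    (hz : z ∈ Icc u v) : |d x - d z| ≤ v - u := by
  have hdist : |d x - d z| ≤ |x - z| := by simpa [Real.dist_eq] using hd.dist_le_mul x z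
  exact hdist.trans (abs_sub_le_of_le_of_le hx.1 hx.2 hz.1 hz.2)

theorem setIntegral_const_Ico {u v : ℝ} (huv : u ≤ v) (r : ℝ) :
    ∫ _ in Ico u v, r = (v - u) * r := by
  rw [setIntegral_const, measureReal_def, Real.volume_Ico, ENNReal.toReal_ofReal (by linarith),
    smul_eq_mul]

theorem integrableOn_one_div_Ico (hd : LipschitzWith 1 d) (hd0 : ∀ x, 0 < d x) :
    IntegrableOn (fun x => 1 / d x) (Ico u v) :=
  (continuous_const.div hd.continuous fun x => (hd0 x).ne').integrableOn_Icc.mono_set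
    Ico_subset_Icc_self

theorem sub_le_setIntegral_one_div_mul (hd : LipschitzWith 1 d) (hd0 : ∀ x, 0 < d x)
    (hz : z ∈ Icc u v) : v - u ≤ (∫ x in Ico u v, 1 / d x) * (d z + (v - u)) := by
  have hpos : 0 < d z + (v - u) := by linarith [hd0 z, hz.1.trans hz.2]
  have hmono : ∫ _ in Ico u v, 1 / (d z + (v - u)) ≤ ∫ x in Ico u v, 1 / d x := by
    refine setIntegral_mono_on (integrableOn_const measure_Ico_lt_top.ne)
      (integrableOn_one_div_Ico hd hd0) measurableSet_Ico
      fun x hx => one_div_le_one_div_of_le (hd0 x) ?_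
    linarith [(abs_le.mp (hd.abs_sub_le_of_mem_Icc (Ico_subset_Icc_self hx) hz)).2]
  rwa [setIntegral_const_Ico (hz.1.trans hz.2), mul_one_div, div_le_iff₀ hpos] at hmono

theorem setIntegral_one_div_mul_le_sub (hd : LipschitzWith 1 d) (hd0 : ∀ x, 0 < d x)
    (hz : z ∈ Icc u v) : (∫ x in Ico u v, 1 / d x) * (d z - (v - u)) ≤ v - u := by
  have huv : u ≤ v := hz.1.trans hz.2
  rcases le_or_gt (d z) (v - u) with hsmall | hpos
  · have hnonneg : 0 ≤ ∫ x in Ico u v, 1 / d x :=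
      setIntegral_nonneg measurableSet_Ico fun x _ => (one_div_pos.2 (hd0 x)).le
    nlinarith
  rw [← sub_pos] at hpos
  have hmono : ∫ x in Ico u v, 1 / d x ≤ ∫ _ in Ico u v, 1 / (d z - (v - u)) := by
    refine setIntegral_mono_on (integrableOn_one_div_Ico hd hd0)
      (integrableOn_const measure_Ico_lt_top.ne) measurableSet_Ico
      fun x hx => one_div_le_one_div_of_le hpos ?_
    linarith [(abs_le.mp (hd.abs_sub_le_of_mem_Icc (Ico_subset_Icc_self hx) hz)).1]
  rwa [setIntegral_const_Ico huv, mul_one_div, le_div_iff₀ hpos] at hmono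

theorem sub_le_mul_sub_of_setIntegral_one_div_eq (hd : LipschitzWith 1 d) (hd0 : ∀ x, 0 < d x)
    {u' v' k k' : ℝ} (hk : ∫ x in Ico u v, 1 / d x = k) (hk' : ∫ x in Ico u' v', 1 / d x = k')
    (hk1 : k < 1) (hk'0 : 0 < k') (hz : z ∈ Icc u v) (hz' : z ∈ Icc u' v') :
    v - u ≤ k * (1 + k') / ((1 - k) * k') * (v' - u') := by
  have hlower := sub_le_setIntegral_one_div_mul hd hd0 hz
  have hupper := setIntegral_one_div_mul_le_sub hd hd0 hz'
  rw [hk] at hlower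
  rw [hk'] at hupper
  have hk0 : 0 ≤ k :=
    hk ▸ setIntegral_nonneg measurableSet_Ico fun x _ => (one_div_pos.2 (hd0 x)).le
  rw [div_mul_eq_mul_div, le_div_iff₀ (mul_pos (sub_pos.2 hk1) hk'0)]
  nlinarith [mul_le_mul_of_nonneg_left hupper hk0, mul_le_mul_of_nonneg_left hlower hk'0.le]

end Lipschitz

theorem ampIcc_subset_ampIcc {u v u' v' z a a' : ℝ} (hz : z ∈ Icc u v) (hz' : z ∈ Icc u' v')
    (h : (a + 1) * (v - u) ≤ (a' - 1) * (v' - u')) : ampIcc u v a ⊆ ampIcc u' v' a' := by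
  obtain ⟨hz1, hz2⟩ := hz
  obtain ⟨hz1', hz2'⟩ := hz'
  exact Icc_subset_Icc (by linarith) (by linarith)

theorem ofReal_le_volume_inter_ampIcc_of_mem_Icc {Γ : Set ℝ} {u v u' v' z γ a γ' a' K' : ℝ}
    (hz : z ∈ Icc u v) (hz' : z ∈ Icc u' v') (hγ' : 0 ≤ γ') (ha' : 0 ≤ a')
    (hlen : (a + 1) * (v - u) ≤ (a' - 1) * (v' - u')) (hlen' : v' - u' ≤ K' * (v - u))
    (hK' : γ' * a' * K' ≤ γ * a)
    (hdens : ENNReal.ofReal (γ * a * (v - u)) ≤ volume (Γ ∩ ampIcc u v a)) :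
    ENNReal.ofReal (γ' * a' * (v' - u')) ≤ volume (Γ ∩ ampIcc u' v' a') := by
  have hmass : γ' * a' * (v' - u') ≤ γ * a * (v - u) := calc
    γ' * a' * (v' - u') ≤ γ' * a' * (K' * (v - u)) := by gcongr
    _ = γ' * a' * K' * (v - u) := by ring
    _ ≤ γ * a * (v - u) := mul_le_mul_of_nonneg_right hK' (by linarith [hz.1.trans hz.2])
  calc ENNReal.ofReal (γ' * a' * (v' - u'))
      ≤ ENNReal.ofReal (γ * a * (v - u)) := ENNReal.ofReal_le_ofReal hmass
    _ ≤ volume (Γ ∩ ampIcc u v a) := hdens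
    _ ≤ volume (Γ ∩ ampIcc u' v' a') :=
      measure_mono (inter_subset_inter_right Γ (ampIcc_subset_ampIcc hz hz' hlen))

theorem stmt3_general
    (d : ℝ → ℝ) (hd0 : ∀ x, 0 < d x)
    (hlip : ∀ x y : ℝ, |d x - d y| ≤ |x - y|)
    (c c' : ℝ) (hc : c ∈ Set.Ioo (0 : ℝ) 1) (hc' : c' ∈ Set.Ioo (0 : ℝ) 1)
    (s t : ℤ → ℝ)
    (hs : StrictMono s) (hstop : Tendsto s atTop atTop) (hsbot : Tendsto s atBot atBot)
    (ht : StrictMono t)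
    (hsint : ∀ n : ℤ, ∫ x in Set.Ico (s n) (s (n + 1)), 1 / d x = c)
    (htint : ∀ m : ℤ, ∫ x in Set.Ico (t m) (t (m + 1)), 1 / d x = c')
    (Γ : Set ℝ)
    (γ a : ℝ) (hγ : γ ∈ Set.Ioo (0 : ℝ) 1) (ha : 1 ≤ a)
    (hdens : ∀ n : ℤ, ENNReal.ofReal (γ * a * (s (n + 1) - s n))
      ≤ volume (Γ ∩ ampIcc (s n) (s (n + 1)) a)) :
    ∃ γ' ∈ Set.Ioo (0 : ℝ) 1, ∃ a' : ℝ, 1 ≤ a' ∧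
      ∀ m : ℤ, ENNReal.ofReal (γ' * a' * (t (m + 1) - t m))
        ≤ volume (Γ ∩ ampIcc (t m) (t (m + 1)) a') := by
  have hd : LipschitzWith 1 d :=
    LipschitzWith.of_dist_le_mul fun x y => by simpa [Real.dist_eq] using hlip x y
  obtain ⟨hc0, hc1⟩ := hc
  obtain ⟨hc'0, hc'1⟩ := hc'
  have h1c : 0 < 1 - c := sub_pos.2 hc1
  have h1c' : 0 < 1 - c' := sub_pos.2 hc'1
  set K := c * (1 + c') / ((1 - c) * c')
  set K' := c' * (1 + c) / ((1 - c') * c)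
  set a' := (a + 1) * K + 1
  have ha' : 1 ≤ a' := le_add_of_nonneg_left (by positivity)
  set γ' := min (γ * a / (K' * a')) (1 / 2)
  have hγ' : 0 < γ' := lt_min (by have := hγ.1; positivity) (by norm_num)
  have hγ'K' : γ' * a' * K' ≤ γ * a := by
    rw [mul_assoc, mul_comm a', ← le_div_iff₀ (by positivity)]
    exact min_le_left _ _
  refine ⟨γ', ⟨hγ', (min_le_right _ _).trans_lt (by norm_num)⟩, a', ha', fun m => ?_⟩
  obtain ⟨n, hn⟩ := hs.monotone.exists_mem_Ico_of_tendsto hstop hsbot (t m)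
  have hz : t m ∈ Icc (s n) (s (n + 1)) := Ico_subset_Icc_self hn
  have hz' : t m ∈ Icc (t m) (t (m + 1)) := ⟨le_rfl, (ht (lt_add_one m)).le⟩
  have hL := sub_le_mul_sub_of_setIntegral_one_div_eq hd hd0 (hsint n) (htint m) hc1 hc'0 hz hz'
  have hL' := sub_le_mul_sub_of_setIntegral_one_div_eq hd hd0 (htint m) (hsint n) hc'1 hc0 hz' hz
  refine ofReal_le_volume_inter_ampIcc_of_mem_Icc hz hz' hγ'.le (by linarith) ?_ hL' hγ'K' (hdens n)
  rw [add_sub_cancel_right, mul_assoc]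
  exact mul_le_mul_of_nonneg_left hL (by linarith)

theorem stmt3
    (d : ℝ → ℝ) (hd0 : ∀ x, 0 < d x)
    (hlip : ∀ x y : ℝ, |d x - d y| ≤ |x - y|)
    (c c' : ℝ) (hc : c ∈ Set.Ioo (0 : ℝ) 1) (hc' : c' ∈ Set.Ioo (0 : ℝ) 1)
    (s t : ℤ → ℝ)
    (hs : StrictMono s) (hstop : Tendsto s atTop atTop) (hsbot : Tendsto s atBot atBot)
    (ht : StrictMono t) (httop : Tendsto t atTop atTop) (htbot : Tendsto t atBot atBot)
    (hsint : ∀ n : ℤ, ∫ x in Set.Ico (s n) (s (n + 1)), 1 / d x = c)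
    (htint : ∀ m : ℤ, ∫ x in Set.Ico (t m) (t (m + 1)), 1 / d x = c')
    (Γ : Set ℝ) (hΓ : MeasurableSet Γ)
    (γ a : ℝ) (hγ : γ ∈ Set.Ioo (0 : ℝ) 1) (ha : 1 ≤ a)
    (hdens : ∀ n : ℤ, ENNReal.ofReal (γ * a * (s (n + 1) - s n))
      ≤ volume (Γ ∩ ampIcc (s n) (s (n + 1)) a)) :
    ∃ γ' ∈ Set.Ioo (0 : ℝ) 1, ∃ a' : ℝ, 1 ≤ a' ∧
      ∀ m : ℤ, ENNReal.ofReal (γ' * a' * (t (m + 1) - t m))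
        ≤ volume (Γ ∩ ampIcc (t m) (t (m + 1)) a') :=
  stmt3_general d hd0 hlip c c' hc hc' s t hs hstop hsbot ht hsint htint Γ γ a hγ ha hdens
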